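/- For even m ≥ 6, the code C^[m] = C^(m) ∪ C^(m)(ρ) (where ρ = m/2 is the covering radius of C^(m)) is a binary linear code of length n = m(m−1)/2, dimension n − m + 2, minimum distance 3, and covering radius ⌊m/4⌋. -/

import Mathlib

open Finset

/-- Coordinate positions of `C^(m)`: the 2-element subsets of `{1,…,m}`. -/
abbrev Coords (m : ℕ) := {s : Finset (Fin m) // s.card = 2}

/-- The parity check matrix `H_m`, whose columns are all weight-2 vectors of length `m`. -/
def Hmat (m : ℕ) (i : Fin m) (c : Coords m) : ZMod 2 := if i ∈ c.1 then 1 else 0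

/-- The code `C^(m)`: the kernel of `H_m` over `F_2`. -/
noncomputable def Cm (m : ℕ) : Submodule (ZMod 2) (Coords m → ZMod 2) :=
  LinearMap.ker (Matrix.mulVecLin (Matrix.of fun i c => Hmat m i c))

/-- The distance from a vector `x` to a code `C`. -/
noncomputable def distToCode {ι : Type*} [Fintype ι]
    (C : Set (ι → ZMod 2)) (x : ι → ZMod 2) : ℕ :=
  sInf {d | ∃ c ∈ C, hammingDist x c = d}

/-- The covering radius of a code `C`. -/
noncomputable def covRad {ι : Type*} [Fintype ι] (C : Set (ι → ZMod 2)) : ℕ :=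
  sSup {d | ∃ x, distToCode C x = d}

/-- `C(i)`, the set of vectors at distance exactly `i` from `C`. -/
noncomputable def Cset {ι : Type*} [Fintype ι] (C : Set (ι → ZMod 2)) (i : ℕ) :
    Set (ι → ZMod 2) := {x | distToCode C x = i}

/-- The coset `x + C`. -/
def cosetOf {ι : Type*} (C : Set (ι → ZMod 2)) (x : ι → ZMod 2) : Set (ι → ZMod 2) :=
  (fun c => x + c) '' C

/-- The weight of the coset `x + C`: the minimum Hamming weight of its elements. -/
noncomputable def cosetWt {ι : Type*} [Fintype ι] (C : Set (ι → ZMod 2)) (x : ι → ZMod 2) : ℕ :=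
  sInf {w | ∃ v ∈ cosetOf C x, hammingNorm v = w}

/-- Complete regularity of a code `C` with covering radius `ρ` and
intersection numbers `b i`, `c i`. -/
noncomputable def compRegular {ι : Type*} [Fintype ι] (C : Set (ι → ZMod 2)) (ρ : ℕ)
    (b c : ℕ → ℕ) : Prop :=
  (∀ i, 1 ≤ i → i ≤ ρ → ∀ x ∈ Cset C i,
      Nat.card {y | hammingDist x y = 1 ∧ y ∈ Cset C (i - 1)} = c i) ∧
  (∀ i, i < ρ → ∀ x ∈ Cset C i,
      Nat.card {y | hammingDist x y = 1 ∧ y ∈ Cset C (i + 1)} = b i)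

/-- The action of a coordinate permutation on vectors. -/
def permAct {ι : Type*} (π : Equiv.Perm ι) (v : ι → ZMod 2) : ι → ZMod 2 := v ∘ π

/-- The automorphism group of a code, as a set of coordinate permutations. -/
def autSet {ι : Type*} (C : Set (ι → ZMod 2)) : Set (Equiv.Perm ι) :=
  {π | ∀ v, permAct π v ∈ C ↔ v ∈ C}

/-- Complete transitivity: any two cosets of the same weight are related by
an automorphism of the code. -/
noncomputable def compTrans {ι : Type*} [Fintype ι] (C : Set (ι → ZMod 2)) : Prop :=
  ∀ x x', distToCode C x = distToCode C x' →
    ∃ π ∈ autSet C, permAct π '' cosetOf C x = cosetOf C x'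

/-! Read `x` as the edge set of a graph on `m` vertices: `H_m x` is its vector of degree
parities and `oddSet x` its set of odd-degree vertices, which always has even size. A set `T` of
even size is the odd set of a perfect matching on `T`, with `|T|/2` edges, and no graph with odd
set `T` has fewer, since every edge covers at most two odd vertices. So the distance from `x` to
`C^(m)` is `|oddSet x| / 2`, and `C^(m)(m/2)` is the coset of graphs in which every vertex is odd.
Hence `C^[m]` consists of the `x` with `oddSet x = ∅` or `univ`, it lies at distance
`min (t/2) ((m-t)/2)` from a vector with `t` odd vertices, and the maximum over even `t ≤ m` is
`⌊m/4⌋`. The image of `H_m` is the even-weight vectors, which gives the dimension; one or two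
edges always leave an odd vertex, and a graph with all `m ≥ 6` vertices odd has at least three
edges, which gives the minimum distance. -/

open scoped symmDiff

lemma ZMod.two_cases (a : ZMod 2) : a = 0 ∨ a = 1 := by
  revert a; decide

lemma ZMod.two_add_ne_zero_iff (a b : ZMod 2) :
    a + b ≠ 0 ↔ (a ≠ 0 ∧ b = 0 ∨ b ≠ 0 ∧ a = 0) := by
  revert a b; decide

lemma ZMod.two_eq_ite (a : ZMod 2) : a = if a ≠ 0 then 1 else 0 := by
  revert a; decide

lemma ZMod.two_sum_eq_card {ι : Type*} [Fintype ι] (v : ι → ZMod 2) :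
    ∑ i, v i = (#{i | v i ≠ 0} : ZMod 2) := by
  rw [← Finset.sum_boole]
  exact Finset.sum_congr rfl fun i _ => ZMod.two_eq_ite (v i)

lemma ZMod.two_funext {ι : Type*} {v w : ι → ZMod 2} (h : ∀ i, v i ≠ 0 ↔ w i ≠ 0) :
    v = w :=
  funext fun i => by rw [ZMod.two_eq_ite (v i), ZMod.two_eq_ite (w i), if_congr (h i) rfl rfl]

lemma Finset.symmDiff_empty {α : Type*} [DecidableEq α] (s : Finset α) : s ∆ ∅ = s :=
  symmDiff_bot s

lemma Finset.card_symmDiff_univ {α : Type*} [Fintype α] [DecidableEq α] (s : Finset α) :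
    #(s ∆ univ) = Fintype.card α - #s := by
  rw [← Finset.top_eq_univ, symmDiff_top, hnot_eq_compl, Finset.card_compl]

lemma hammingNorm_add_le {ι : Type*} [Fintype ι] {β : ι → Type*} [∀ i, AddGroup (β i)]
    [∀ i, DecidableEq (β i)] (x y : ∀ i, β i) :
    hammingNorm (x + y) ≤ hammingNorm x + hammingNorm y := by
  calc hammingNorm (x + y) = hammingDist 0 (x + y) := by rw [hammingDist_zero_left]
    _ ≤ hammingDist 0 x + hammingDist x (x + y) := hammingDist_triangle _ _ _
    _ = hammingNorm x + hammingNorm y := by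
      rw [hammingDist_zero_left, hammingDist_eq_hammingNorm, neg_add_cancel_left]

lemma hammingNorm_single {ι : Type*} [Fintype ι] [DecidableEq ι] {β : ι → Type*}
    [∀ i, Zero (β i)] [∀ i, DecidableEq (β i)] (i : ι) {a : β i} (ha : a ≠ 0) :
    hammingNorm (Pi.single i a) = 1 := by
  refine Finset.card_eq_one.mpr ⟨i, Finset.ext fun j => ?_⟩
  by_cases hj : j = i
  · subst hj; simp [ha]
  · simp [hj]

lemma distToCode_eq {ι : Type*} [Fintype ι] {C : Set (ι → ZMod 2)} {x : ι → ZMod 2}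
    {d : ℕ} (hex : ∃ c ∈ C, hammingDist x c = d) (hle : ∀ c ∈ C, d ≤ hammingDist x c) :
    distToCode C x = d :=
  IsLeast.csInf_eq ⟨hex, by rintro _ ⟨c, hc, rfl⟩; exact hle c hc⟩

section

variable {m : ℕ}

def edge {i j : Fin m} (h : i ≠ j) : Coords m := ⟨{i, j}, Finset.card_pair h⟩

noncomputable def syndrome (m : ℕ) : (Coords m → ZMod 2) →ₗ[ZMod 2] (Fin m → ZMod 2) :=
  Matrix.mulVecLin (Matrix.of fun i c => Hmat m i c)

noncomputable def oddSet (x : Coords m → ZMod 2) : Finset (Fin m) := {i | syndrome m x i ≠ 0}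

lemma syndrome_apply (x : Coords m → ZMod 2) (i : Fin m) :
    syndrome m x i = ∑ c, Hmat m i c * x c := rfl

lemma Cm_eq_ker_syndrome : Cm m = LinearMap.ker (syndrome m) := rfl

lemma mem_Cm_iff_oddSet_eq_empty {x : Coords m → ZMod 2} : x ∈ Cm m ↔ oddSet x = ∅ := by
  simp [Cm_eq_ker_syndrome, oddSet, funext_iff, Finset.filter_eq_empty_iff]

lemma oddSet_add (x y : Coords m → ZMod 2) : oddSet (x + y) = oddSet x ∆ oddSet y := by
  ext i
  simp [oddSet, Finset.mem_symmDiff, ZMod.two_add_ne_zero_iff]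

lemma oddSet_neg (x : Coords m → ZMod 2) : oddSet (-x) = oddSet x := by
  simp [oddSet]

lemma oddSet_sub (x y : Coords m → ZMod 2) : oddSet (x - y) = oddSet x ∆ oddSet y := by
  rw [sub_eq_add_neg, oddSet_add, oddSet_neg]

lemma oddSet_single (e : Coords m) : oddSet (Pi.single e 1) = e.1 := by
  ext i
  simp [oddSet, syndrome, Hmat]

lemma sum_syndrome (x : Coords m → ZMod 2) : ∑ i, syndrome m x i = 0 := by
  have hcol : ∀ c : Coords m, ∑ i, Hmat m i c = 0 := fun c => by
    simp only [Hmat, Finset.sum_ite_mem, Finset.univ_inter, Finset.sum_const, c.2, nsmul_eq_mul,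
      mul_one]
    rfl
  simp [syndrome, Matrix.mulVec, dotProduct, Finset.sum_comm (γ := Fin m),
    ← Finset.sum_mul, hcol]

lemma even_card_oddSet (x : Coords m → ZMod 2) : Even #(oddSet x) := by
  rw [← ZMod.natCast_eq_zero_iff_even, oddSet, ← ZMod.two_sum_eq_card, sum_syndrome]

lemma card_oddSet_le (x : Coords m → ZMod 2) : #(oddSet x) ≤ 2 * hammingNorm x := by
  have hsub : oddSet x ⊆ ({c | x c ≠ 0} : Finset (Coords m)).biUnion Subtype.val := by
    intro i hi
    have hi' : syndrome m x i ≠ 0 := (Finset.mem_filter.mp hi).2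
    rw [syndrome_apply] at hi'
    obtain ⟨c, -, hc⟩ := Finset.exists_ne_zero_of_sum_ne_zero hi'
    have hic : i ∈ c.1 := by by_contra h; simp [Hmat, h] at hc
    exact Finset.mem_biUnion.mpr ⟨c, by simpa using right_ne_zero_of_mul hc, hic⟩
  calc #(oddSet x) ≤ _ := Finset.card_le_card hsub
    _ ≤ ∑ c ∈ ({c | x c ≠ 0} : Finset (Coords m)), #c.1 := Finset.card_biUnion_le
    _ = 2 * hammingNorm x := by
      rw [Finset.sum_congr rfl fun c _ => c.2, Finset.sum_const, smul_eq_mul, mul_comm]; rfl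

lemma exists_oddSet_eq_of_card_eq (k : ℕ) :
    ∀ T : Finset (Fin m), #T = 2 * k → ∃ y, oddSet y = T ∧ hammingNorm y ≤ k := by
  induction k with
  | zero =>
    intro T hT
    exact ⟨0, by simp_all [oddSet], by simp⟩
  | succ k ih =>
    intro T hT
    obtain ⟨i, hi, j, hj, hij⟩ := Finset.one_lt_card.mp (by omega : 1 < #T)
    have hsub : (edge hij).1 ⊆ T := Finset.insert_subset hi (Finset.singleton_subset_iff.mpr hj)
    obtain ⟨y, hyT, hy⟩ := ih (T \ (edge hij).1)
      (by rw [Finset.card_sdiff_of_subset hsub, (edge hij).2]; omega)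
    refine ⟨y + Pi.single (edge hij) 1, ?_, ?_⟩
    · rw [oddSet_add, hyT, oddSet_single, sdiff_symmDiff_eq_sup, sup_eq_left.mpr hsub]
    · calc _ ≤ hammingNorm y + 1 := by
            simpa [hammingNorm_single] using hammingNorm_add_le y (Pi.single (edge hij) 1)
        _ ≤ k + 1 := by omega

lemma exists_oddSet_eq {T : Finset (Fin m)} (hT : Even #T) :
    ∃ y, oddSet y = T ∧ 2 * hammingNorm y = #T := by
  obtain ⟨k, hk⟩ := hT
  obtain ⟨y, hyT, hy⟩ := exists_oddSet_eq_of_card_eq k T (by omega)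
  refine ⟨y, hyT, le_antisymm (by omega) ?_⟩
  simpa [hyT] using card_oddSet_le y

lemma card_symmDiff_oddSet_le (x c : Coords m → ZMod 2) :
    #(oddSet x ∆ oddSet c) ≤ 2 * hammingDist x c := by
  simpa [hammingDist_eq_hammingNorm, oddSet_add, oddSet_neg] using card_oddSet_le (-x + c)

lemma exists_oddSet_eq_hammingDist (x : Coords m → ZMod 2) {T : Finset (Fin m)}
    (hT : Even #(oddSet x ∆ T)) :
    ∃ c, oddSet c = T ∧ 2 * hammingDist x c = #(oddSet x ∆ T) := by
  obtain ⟨y, hy, hyn⟩ := exists_oddSet_eq hT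
  refine ⟨x + y, ?_, ?_⟩
  · rw [oddSet_add, hy, symmDiff_symmDiff_cancel_left]
  · rw [hammingDist_eq_hammingNorm, neg_add_cancel_left, hyn]

lemma distToCode_Cm (x : Coords m → ZMod 2) :
    distToCode (Cm m : Set (Coords m → ZMod 2)) x = #(oddSet x) / 2 := by
  obtain ⟨c, hc, hd⟩ := exists_oddSet_eq_hammingDist x (T := ∅)
    (by simpa [Finset.symmDiff_empty] using even_card_oddSet x)
  rw [Finset.symmDiff_empty] at hd
  refine distToCode_eq ⟨c, mem_Cm_iff_oddSet_eq_empty.mpr hc, by omega⟩ fun c' hc' => ?_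
  have hdist := card_symmDiff_oddSet_le x c'
  rw [mem_Cm_iff_oddSet_eq_empty.mp hc', Finset.symmDiff_empty] at hdist
  omega

lemma Cset_Cm_half (he : Even m) :
    Cset (Cm m : Set (Coords m → ZMod 2)) (m / 2) = {x | oddSet x = univ} := by
  ext x
  have hle := Finset.card_le_univ (oddSet x)
  obtain ⟨a, ha⟩ := even_card_oddSet x
  obtain ⟨b, hb⟩ := he
  simp only [Cset, Set.mem_ofPred_eq, distToCode_Cm, ← Finset.card_eq_iff_eq_univ,
    Fintype.card_fin] at hle ⊢
  omega

noncomputable def coordSum (m : ℕ) : (Fin m → ZMod 2) →ₗ[ZMod 2] ZMod 2 :=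
  Fintype.linearCombination (ZMod 2) fun _ => 1

lemma coordSum_apply (v : Fin m → ZMod 2) : coordSum m v = ∑ i, v i := by
  simp [coordSum, Fintype.linearCombination_apply]

lemma range_syndrome : LinearMap.range (syndrome m) = LinearMap.ker (coordSum m) := by
  ext v
  rw [LinearMap.mem_range, LinearMap.mem_ker, coordSum_apply]
  constructor
  · rintro ⟨x, rfl⟩
    exact sum_syndrome x
  · intro hv
    obtain ⟨y, hy, -⟩ := exists_oddSet_eq (T := {i | v i ≠ 0})
      (by rwa [← ZMod.natCast_eq_zero_iff_even, ← ZMod.two_sum_eq_card])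
    exact ⟨y, ZMod.two_funext fun i => by simpa [oddSet] using congrArg (i ∈ ·) hy⟩

lemma finrank_Cm_add_sub_one (hm : 1 ≤ m) :
    Module.finrank (ZMod 2) (Cm m) + (m - 1) = Fintype.card (Coords m) := by
  have hsurj : LinearMap.range (coordSum m) = ⊤ := LinearMap.range_eq_top.mpr fun a =>
    ⟨Pi.single ⟨0, hm⟩ a, by simp [coordSum_apply]⟩
  have hsum := LinearMap.finrank_range_add_finrank_ker (coordSum m)
  have hCm := LinearMap.finrank_range_add_finrank_ker (syndrome m)
  rw [hsurj, finrank_top, Module.finrank_self, Module.finrank_fin_fun] at hsum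
  rw [range_syndrome, Module.finrank_fintype_fun_eq_card, ← Cm_eq_ker_syndrome] at hCm
  omega

lemma eq_sum_single_of_zmod_two {ι : Type*} [Fintype ι] [DecidableEq ι] (x : ι → ZMod 2) :
    x = ∑ c ∈ {c | x c ≠ 0}, Pi.single c 1 := by
  ext c
  rw [Finset.sum_apply]
  simp only [Pi.single_apply, Finset.sum_ite_eq, Finset.mem_filter, Finset.mem_univ, true_and]
  exact ZMod.two_eq_ite (x c)

lemma three_le_hammingNorm_of_mem_Cm {x : Coords m → ZMod 2} (hx : x ∈ Cm m) (hx0 : x ≠ 0) :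
    3 ≤ hammingNorm x := by
  rw [mem_Cm_iff_oddSet_eq_empty, eq_sum_single_of_zmod_two x] at hx
  have hpos := hammingNorm_pos_iff.mpr hx0
  by_contra! hlt
  interval_cases h : hammingNorm x
  · obtain ⟨e, he⟩ := Finset.card_eq_one.mp h
    rw [he, Finset.sum_singleton, oddSet_single] at hx
    simpa [hx] using e.2
  · obtain ⟨e, f, hef, he⟩ := Finset.card_eq_two.mp h
    rw [he, Finset.sum_pair hef, oddSet_add, oddSet_single, oddSet_single,
      ← Finset.bot_eq_empty, symmDiff_eq_bot] at hx
    exact hef (Subtype.ext hx)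

lemma exists_mem_Cm_hammingNorm_eq_three (hm : 3 ≤ m) :
    ∃ x ∈ Cm m, x ≠ 0 ∧ hammingNorm x = 3 := by
  let a : Fin m := ⟨0, by omega⟩
  let b : Fin m := ⟨1, by omega⟩
  let c : Fin m := ⟨2, by omega⟩
  have hab : a ≠ b := by simp [a, b, Fin.ext_iff]
  have hac : a ≠ c := by simp [a, c, Fin.ext_iff]
  have hbc : b ≠ c := by simp [b, c, Fin.ext_iff]
  have hne : edge hab ≠ edge hac := fun h => by
    simpa [edge, b, c, Fin.ext_iff] using congrArg (b ∈ ·.1) h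
  have hne' : edge hab ≠ edge hbc := fun h => by
    simpa [edge, a, b, c, Fin.ext_iff] using congrArg (a ∈ ·.1) h
  let x : Coords m → ZMod 2 :=
    Pi.single (edge hab) 1 + Pi.single (edge hac) 1 + Pi.single (edge hbc) 1
  have hx : x ∈ Cm m := by
    rw [mem_Cm_iff_oddSet_eq_empty]
    ext i
    simp only [x, a, b, c, edge, oddSet_add, oddSet_single, Finset.mem_symmDiff,
      Finset.mem_insert, Finset.mem_singleton, Finset.notMem_empty, Fin.ext_iff, iff_false]
    omega
  have hx0 : x ≠ 0 := fun h => by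
    simpa [x, Pi.single_apply, hne, hne'] using congrFun h (edge hab)
  refine ⟨x, hx, hx0, le_antisymm ?_ (three_le_hammingNorm_of_mem_Cm hx hx0)⟩
  calc hammingNorm x ≤ 1 + 1 + 1 := by
        refine (hammingNorm_add_le _ _).trans (add_le_add ((hammingNorm_add_le _ _).trans ?_) ?_)
        all_goals simp [hammingNorm_single]
    _ = 3 := rfl

section extension

-- `C^[m] = C^(m) ⊔ span {y₀}` for any `y₀` with every vertex odd, such as the all-ones vector
-- or a perfect matching.
variable {y₀ : Coords m → ZMod 2} (hy₀ : oddSet y₀ = univ)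
include hy₀

lemma mem_sup_span_iff (x : Coords m → ZMod 2) :
    x ∈ Cm m ⊔ Submodule.span (ZMod 2) {y₀} ↔ oddSet x = ∅ ∨ oddSet x = univ := by
  rw [Submodule.mem_sup]
  constructor
  · rintro ⟨c, hc, z, hz, rfl⟩
    obtain ⟨a, rfl⟩ := Submodule.mem_span_singleton.mp hz
    rw [mem_Cm_iff_oddSet_eq_empty] at hc
    rcases ZMod.two_cases a with rfl | rfl
    · simp [hc]
    · simp [oddSet_add, hc, hy₀]
  · rintro (h | h)
    · exact ⟨x, mem_Cm_iff_oddSet_eq_empty.mpr h, 0, zero_mem _, add_zero x⟩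
    · refine ⟨x - y₀, ?_, y₀, Submodule.mem_span_singleton_self _, sub_add_cancel x y₀⟩
      rw [mem_Cm_iff_oddSet_eq_empty, oddSet_sub, h, hy₀, symmDiff_self, Finset.bot_eq_empty]

lemma coe_sup_span_eq (he : Even m) :
    ((Cm m ⊔ Submodule.span (ZMod 2) {y₀} : Submodule (ZMod 2) (Coords m → ZMod 2)) :
      Set (Coords m → ZMod 2)) =
      (Cm m : Set (Coords m → ZMod 2)) ∪ Cset (Cm m : Set (Coords m → ZMod 2)) (m / 2) := by
  ext x
  rw [Cset_Cm_half he, SetLike.mem_coe, mem_sup_span_iff hy₀, Set.mem_union, SetLike.mem_coe,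
    mem_Cm_iff_oddSet_eq_empty, Set.mem_ofPred_eq]

lemma finrank_sup_span_add_sub_one (hm : 1 ≤ m) :
    Module.finrank (ZMod 2) (Cm m ⊔ Submodule.span (ZMod 2) {y₀} :
      Submodule (ZMod 2) (Coords m → ZMod 2)) + (m - 1) = Fintype.card (Coords m) + 1 := by
  have hy₀C : y₀ ∉ Cm m := by
    rw [mem_Cm_iff_oddSet_eq_empty, hy₀, ← Finset.not_nonempty_iff_eq_empty, not_not]
    exact Finset.univ_nonempty_iff.mpr ⟨⟨0, hm⟩⟩
  rw [Submodule.finrank_sup_span_singleton hy₀C, ← finrank_Cm_add_sub_one hm]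
  omega

lemma distToCode_sup_span (he : Even m) (x : Coords m → ZMod 2) :
    distToCode ((Cm m ⊔ Submodule.span (ZMod 2) {y₀} :
        Submodule (ZMod 2) (Coords m → ZMod 2)) : Set (Coords m → ZMod 2)) x =
      min (#(oddSet x) / 2) ((m - #(oddSet x)) / 2) := by
  have hev := even_card_oddSet x
  have hle := Finset.card_le_univ (oddSet x)
  rw [Fintype.card_fin] at hle
  have hcompl : Even #(oddSet x ∆ univ) := by
    rw [Finset.card_symmDiff_univ, Fintype.card_fin]; exact he.tsub hev
  obtain ⟨c₁, hc₁, hd₁⟩ := exists_oddSet_eq_hammingDist x (T := ∅)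
    (by rwa [Finset.symmDiff_empty])
  obtain ⟨c₂, hc₂, hd₂⟩ := exists_oddSet_eq_hammingDist x hcompl
  rw [Finset.symmDiff_empty] at hd₁
  rw [Finset.card_symmDiff_univ, Fintype.card_fin] at hd₂
  apply distToCode_eq
  · rcases le_total (#(oddSet x)) (m - #(oddSet x)) with h | h
    · exact ⟨c₁, (mem_sup_span_iff hy₀ c₁).mpr (Or.inl hc₁), by omega⟩
    · exact ⟨c₂, (mem_sup_span_iff hy₀ c₂).mpr (Or.inr hc₂), by omega⟩
  · intro c hc
    have hdist := card_symmDiff_oddSet_le x c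
    rcases (mem_sup_span_iff hy₀ c).mp hc with h | h
    · rw [h, Finset.symmDiff_empty] at hdist; omega
    · rw [h, Finset.card_symmDiff_univ, Fintype.card_fin] at hdist; omega

lemma covRad_sup_span (he : Even m) :
    covRad ((Cm m ⊔ Submodule.span (ZMod 2) {y₀} :
        Submodule (ZMod 2) (Coords m → ZMod 2)) : Set (Coords m → ZMod 2)) = m / 4 := by
  refine IsGreatest.csSup_eq ⟨?_, ?_⟩
  · obtain ⟨T, -, hT⟩ := Finset.exists_subset_card_eq (s := (univ : Finset (Fin m)))
      (n := 2 * (m / 4)) (by rw [Finset.card_univ, Fintype.card_fin]; omega)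
    obtain ⟨y, hy, -⟩ := exists_oddSet_eq (T := T) (by rw [hT]; exact even_two_mul _)
    refine ⟨y, ?_⟩
    rw [distToCode_sup_span hy₀ he, hy, hT]
    obtain ⟨k, hk⟩ := he
    omega
  · rintro d ⟨x, rfl⟩
    rw [distToCode_sup_span hy₀ he]
    have hle := Finset.card_le_univ (oddSet x)
    rw [Fintype.card_fin] at hle
    omega

lemma isLeast_hammingNorm_sup_span (hm : 6 ≤ m) :
    IsLeast {w | ∃ x ∈ Cm m ⊔ Submodule.span (ZMod 2) {y₀}, x ≠ 0 ∧ hammingNorm x = w}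
      3 := by
  constructor
  · obtain ⟨x, hx, hx0, hx3⟩ := exists_mem_Cm_hammingNorm_eq_three (by omega : 3 ≤ m)
    exact ⟨x, Submodule.mem_sup_left hx, hx0, hx3⟩
  · rintro w ⟨x, hx, hx0, rfl⟩
    rcases (mem_sup_span_iff hy₀ x).mp hx with h | h
    · exact three_le_hammingNorm_of_mem_Cm (mem_Cm_iff_oddSet_eq_empty.mpr h) hx0
    · have := card_oddSet_le x
      rw [h, Finset.card_univ, Fintype.card_fin] at this
      omega

end extension

end

/-- for even m ≥ 6, C^[m] = C^(m) ∪ C^(m)(ρ) (with ρ = m/2) is a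
binary linear code of length m(m-1)/2, dimension n - m + 2, minimum distance 3
and covering radius ⌊m/4⌋. -/
theorem stmt_13 (m : ℕ) (hm : 6 ≤ m) (he : Even m) :
    ∃ A : Submodule (ZMod 2) (Coords m → ZMod 2),
      (A : Set (Coords m → ZMod 2)) =
        (Cm m : Set (Coords m → ZMod 2)) ∪ Cset (Cm m : Set (Coords m → ZMod 2)) (m / 2) ∧
      Fintype.card (Coords m) = m * (m - 1) / 2 ∧
      Module.finrank (ZMod 2) A = m * (m - 1) / 2 - m + 2 ∧
      IsLeast {w | ∃ x ∈ A, x ≠ 0 ∧ hammingNorm x = w} 3 ∧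
      covRad (A : Set (Coords m → ZMod 2)) = m / 4 := by
  obtain ⟨y₀, hy₀, -⟩ := exists_oddSet_eq (T := (univ : Finset (Fin m)))
    (by rwa [Finset.card_univ, Fintype.card_fin])
  have hcard : Fintype.card (Coords m) = m * (m - 1) / 2 := by
    rw [Fintype.card_finset_len, Fintype.card_fin, Nat.choose_two_right]
  refine ⟨Cm m ⊔ Submodule.span (ZMod 2) {y₀}, coe_sup_span_eq hy₀ he, hcard, ?_,
    isLeast_hammingNorm_sup_span hy₀ hm, covRad_sup_span hy₀ he⟩
  have hrank := finrank_sup_span_add_sub_one hy₀ (by omega : 1 ≤ m)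
  have hm2 : m * 2 ≤ m * (m - 1) := Nat.mul_le_mul_left m (by omega)
  omega
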